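/- arXiv:2202.01399 — 2 statements merged into one kernel-verified Lean document; each statement's English description precedes it below -/
import Mathlib

section
/- Let λ > 0 and g₁, g₂ ∈ ℝ. For h > 0 let Ψ_h(R) = A_h·e^(√λ·R) + B_h·e^(−√λ·R) with A_h = (g₂ − g₁·e^(−√λ·h))/(2·sinh(√λ·h)) and B_h = (−g₂ + g₁·e^(√λ·h))/(2·sinh(√λ·h)). Then there exists C > 0 (depending only on λ, g₁, g₂) such that for all h with 0 < h ≤ 1, one has |Ψ_h'(0) − (g₂ − g₁)/h| ≤ C·h. -/
/-!
With `s = √λ` and `x = s h`, differentiating gives `Ψ_h'(0) = s (A_h - B_h)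
= s (g₂ - g₁ cosh x) / sinh x`, while `(g₂ - g₁) / h = s (g₂ - g₁) / x`. Writing
`g₂ - g₁ cosh x = (g₂ - g₁) - g₁ (cosh x - 1)`, the error is controlled by
`0 ≤ 1/x - 1/sinh x ≤ (cosh x - 1) / sinh x ≤ x`; both inequalities come from the mean value
bounds `sinh x ≤ x cosh x` and `cosh x - 1 ≤ x sinh x`, valid since `sinh`, `cosh` have
monotone derivatives on `[0, ∞)`.
-/

open Real Set

lemma sub_le_deriv_mul_sub_of_monotoneOn {f : ℝ → ℝ} (hf : Differentiable ℝ f) {a b : ℝ}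
    (hab : a ≤ b) (hmono : MonotoneOn (deriv f) (Icc a b)) :
    f b - f a ≤ deriv f b * (b - a) :=
  (convex_Icc a b).image_sub_le_mul_sub_of_deriv_le hf.continuous.continuousOn
    hf.differentiableOn
    (fun _ ht => hmono (interior_subset ht) (right_mem_Icc.2 hab)
      (interior_subset (s := Icc a b) ht).2)
    a (left_mem_Icc.2 hab) b (right_mem_Icc.2 hab) hab

namespace Real

lemma sinh_le_mul_cosh {x : ℝ} (hx : 0 ≤ x) : sinh x ≤ x * cosh x := by
  have hmono : MonotoneOn (deriv sinh) (Icc 0 x) := by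
    rw [deriv_sinh]
    exact cosh_strictMonoOn.monotoneOn.mono Icc_subset_Ici_self
  simpa [deriv_sinh, mul_comm] using
    sub_le_deriv_mul_sub_of_monotoneOn differentiable_sinh hx hmono

lemma cosh_sub_one_le_mul_sinh {x : ℝ} (hx : 0 ≤ x) : cosh x - 1 ≤ x * sinh x := by
  have hmono : MonotoneOn (deriv cosh) (Icc 0 x) := by
    rw [deriv_cosh]
    exact sinh_strictMono.monotone.monotoneOn _
  simpa [deriv_cosh, mul_comm] using
    sub_le_deriv_mul_sub_of_monotoneOn differentiable_cosh hx hmono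

lemma cosh_sub_one_div_sinh_le {x : ℝ} (hx : 0 < x) : (cosh x - 1) / sinh x ≤ x := by
  rw [div_le_iff₀ (sinh_pos_iff.2 hx)]
  exact cosh_sub_one_le_mul_sinh hx.le

lemma inv_sub_inv_sinh_nonneg {x : ℝ} (hx : 0 < x) : 0 ≤ x⁻¹ - (sinh x)⁻¹ :=
  sub_nonneg.2 (inv_anti₀ hx (self_le_sinh_iff.2 hx.le))

lemma inv_sub_inv_sinh_le {x : ℝ} (hx : 0 < x) : x⁻¹ - (sinh x)⁻¹ ≤ (cosh x - 1) / sinh x := by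
  have hsinh : 0 < sinh x := sinh_pos_iff.2 hx
  rw [inv_sub_inv hx.ne' hsinh.ne', div_le_div_iff₀ (mul_pos hx hsinh) hsinh]
  nlinarith [sinh_le_mul_cosh hx.le]

end Real

lemma abs_sub_div_sinh_sub_div_le (a b : ℝ) {x : ℝ} (hx : 0 < x) :
    |(b - a * cosh x) / sinh x - (b - a) / x| ≤ (|b - a| + |a|) * x := by
  have hsinh : 0 < sinh x := sinh_pos_iff.2 hx
  have hsplit : (b - a * cosh x) / sinh x - (b - a) / x
      = -((b - a) * (x⁻¹ - (sinh x)⁻¹)) - a * ((cosh x - 1) / sinh x) := by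
    field_simp
    ring
  have hq₀ : 0 ≤ (cosh x - 1) / sinh x := div_nonneg (sub_nonneg.2 (one_le_cosh x)) hsinh.le
  have hq : (cosh x - 1) / sinh x ≤ x := cosh_sub_one_div_sinh_le hx
  have hr₀ := inv_sub_inv_sinh_nonneg hx
  have hr : x⁻¹ - (sinh x)⁻¹ ≤ x := (inv_sub_inv_sinh_le hx).trans hq
  calc |(b - a * cosh x) / sinh x - (b - a) / x|
      ≤ |b - a| * |x⁻¹ - (sinh x)⁻¹| + |a| * |(cosh x - 1) / sinh x| := by
        rw [hsplit, ← abs_mul, ← abs_mul, ← abs_neg ((b - a) * _)]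
        exact abs_sub _ _
    _ ≤ |b - a| * x + |a| * x := by
        rw [abs_of_nonneg hr₀, abs_of_nonneg hq₀]
        gcongr
    _ = (|b - a| + |a|) * x := by ring

lemma hasDerivAt_exp_mul_add_exp_neg_mul (A B s R : ℝ) :
    HasDerivAt (fun R => A * exp (s * R) + B * exp (-(s * R)))
      (s * (A * exp (s * R) - B * exp (-(s * R)))) R := by
  have hlin : HasDerivAt (fun R => s * R) s R := by
    simpa using (hasDerivAt_id R).const_mul s
  exact (((hlin.exp).const_mul A).add ((hlin.fun_neg.exp).const_mul B)).congr_deriv (by ring)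

lemma div_two_sinh_sub_div_two_sinh (a b x : ℝ) :
    (b - a * exp (-x)) / (2 * sinh x) - (-b + a * exp x) / (2 * sinh x)
      = (b - a * cosh x) / sinh x := by
  rw [← sub_div, mul_comm 2 (sinh x), ← div_div, div_right_comm, cosh_eq]
  congr 1
  ring

/-- mode-wise form of (3.7)-(3.8): Ψ_h'(0) ≈ (g₂ - g₁)/h up to O(h). -/
theorem stmt_5 (lam g1 g2 : ℝ) (hlam : 0 < lam)
    (Psi : ℝ → ℝ → ℝ)
    (hPsi : ∀ h R : ℝ, Psi h R =
      (g2 - g1 * Real.exp (-(Real.sqrt lam * h))) / (2 * Real.sinh (Real.sqrt lam * h)) *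
        Real.exp (Real.sqrt lam * R)
      + (-g2 + g1 * Real.exp (Real.sqrt lam * h)) / (2 * Real.sinh (Real.sqrt lam * h)) *
        Real.exp (-(Real.sqrt lam * R))) :
    ∃ C > 0, ∀ h : ℝ, 0 < h → h ≤ 1 →
      |deriv (Psi h) 0 - (g2 - g1) / h| ≤ C * h := by
  set s := √lam
  have hs : 0 < s := sqrt_pos.2 hlam
  refine ⟨lam * (|g2 - g1| + |g1| + 1), by positivity, fun h hh _ => ?_⟩
  have hx : 0 < s * h := mul_pos hs hh
  have hderiv : deriv (Psi h) 0 = s * ((g2 - g1 * cosh (s * h)) / sinh (s * h)) := by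
    rw [funext (hPsi h), (hasDerivAt_exp_mul_add_exp_neg_mul _ _ s 0).deriv]
    simp only [mul_zero, neg_zero, exp_zero, mul_one]
    rw [div_two_sinh_sub_div_two_sinh]
  have hquot : (g2 - g1) / h = s * ((g2 - g1) / (s * h)) := by
    field_simp
  calc |deriv (Psi h) 0 - (g2 - g1) / h|
      = s * |(g2 - g1 * cosh (s * h)) / sinh (s * h) - (g2 - g1) / (s * h)| := by
        rw [hderiv, hquot, ← mul_sub, abs_mul, abs_of_pos hs]
    _ ≤ s * ((|g2 - g1| + |g1|) * (s * h)) := by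
        gcongr
        exact abs_sub_div_sinh_sub_div_le g1 g2 hx
    _ = lam * (|g2 - g1| + |g1|) * h := by
        rw [← mul_self_sqrt hlam.le]
        ring
    _ ≤ lam * (|g2 - g1| + |g1| + 1) * h := by
        gcongr lam * ?_ * h
        linarith
end

section
/- Let λ > 0 and g₁, g₂ ∈ ℝ. For h > 0 let Ψ_h(R) = A_h·e^(√λ·R) + B_h·e^(−√λ·R) with A_h = (g₂ − g₁·e^(−√λ·h))/(2·sinh(√λ·h)) and B_h = (−g₂ + g₁·e^(√λ·h))/(2·sinh(√λ·h)). Then there exists C > 0 (depending only on λ, g₁, g₂) such that for all h with 0 < h ≤ 1, one has |Ψ_h'(h) − (g₂ − g₁)/h| ≤ C·h. -/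
/-!
With `s = √λ` and `t = s h`, the derivative at the top is
`Ψ_h'(h) = s (g₂ cosh t - g₁) / sinh t`, so
`Ψ_h'(h) - (g₂ - g₁)/h = (g₂ (t cosh t - sinh t) + g₁ (sinh t - t)) / (h sinh t)`.
Both brackets are `O(t³)` (iterate the mean value inequality starting from `cosh`), while
`sinh t ≥ t`, so the error is `O(t³ / (h t)) = O(h)`.
-/

open Real Set

lemma abs_sub_le_mul_of_abs_deriv_le {f f' : ℝ → ℝ} {x C : ℝ} (hx : 0 ≤ x)
    (hf : ∀ y, HasDerivAt f (f' y) y) (bound : ∀ y ∈ Icc 0 x, |f' y| ≤ C) :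
    |f x - f 0| ≤ C * x := by
  simpa using norm_image_sub_le_of_norm_deriv_le_segment' (fun y _ => (hf y).hasDerivWithinAt)
    (fun y hy => bound y (Ico_subset_Icc_self hy)) x (right_mem_Icc.2 hx)

namespace Real

lemma cosh_le_cosh_of_le {x y : ℝ} (hy : 0 ≤ y) (hyx : y ≤ x) : cosh y ≤ cosh x :=
  cosh_strictMonoOn.monotoneOn hy (hy.trans hyx) hyx

lemma sq_mul_cosh_le {x y : ℝ} (hy : 0 ≤ y) (hyx : y ≤ x) : y ^ 2 * cosh y ≤ x ^ 2 * cosh x := by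
  gcongr
  exact cosh_le_cosh_of_le hy hyx

lemma cosh_sub_one_le {x : ℝ} (hx : 0 ≤ x) : cosh x - 1 ≤ x ^ 2 * cosh x := by
  have := abs_sub_le_mul_of_abs_deriv_le hx hasDerivAt_cosh fun y hy => by
    rw [abs_of_nonneg (sinh_nonneg_iff.2 hy.1)]
    exact sinh_le_sinh.2 hy.2
  rw [cosh_zero] at this
  nlinarith [le_abs_self (cosh x - 1), sinh_le_mul_cosh hx]

lemma abs_sinh_sub_self_le {x : ℝ} (hx : 0 ≤ x) : |sinh x - x| ≤ x ^ 3 * cosh x := by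
  have := abs_sub_le_mul_of_abs_deriv_le hx (fun y => (hasDerivAt_sinh y).sub (hasDerivAt_id y))
    fun y hy => by
      rw [abs_of_nonneg (by linarith [one_le_cosh y])]
      exact (cosh_sub_one_le hy.1).trans (sq_mul_cosh_le hy.1 hy.2)
  simpa [pow_succ, mul_right_comm] using this

lemma abs_mul_cosh_sub_sinh_le {x : ℝ} (hx : 0 ≤ x) :
    |x * cosh x - sinh x| ≤ x ^ 3 * cosh x := by
  have hderiv (y : ℝ) : HasDerivAt (fun y => y * cosh y - sinh y) (y * sinh y) y :=
    (((hasDerivAt_id' y).mul (hasDerivAt_cosh y)).sub (hasDerivAt_sinh y)).congr_deriv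
      (by ring)
  have := abs_sub_le_mul_of_abs_deriv_le hx hderiv fun y hy => by
    rw [abs_of_nonneg (mul_nonneg hy.1 (sinh_nonneg_iff.2 hy.1))]
    calc y * sinh y ≤ y * (y * cosh y) := by gcongr; exacts [hy.1, sinh_le_mul_cosh hy.1]
      _ ≤ x ^ 2 * cosh x := by nlinarith [sq_mul_cosh_le hy.1 hy.2]
  simpa [pow_succ, mul_right_comm] using this

end Real

noncomputable def harmonicMode (s h g₁ g₂ R : ℝ) : ℝ :=
  (g₂ - g₁ * exp (-(s * h))) / (2 * sinh (s * h)) * exp (s * R)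
    + (-g₂ + g₁ * exp (s * h)) / (2 * sinh (s * h)) * exp (-(s * R))

lemma hasDerivAt_harmonicMode_self (s h g₁ g₂ : ℝ) :
    HasDerivAt (harmonicMode s h g₁ g₂) (s * (g₂ * cosh (s * h) - g₁) / sinh (s * h)) h := by
  have hlin : HasDerivAt (fun R => s * R) s h := by simpa using (hasDerivAt_id h).const_mul s
  refine ((hlin.exp.const_mul _).add (hlin.neg.exp.const_mul _)).congr_deriv ?_
  have hexp : exp (s * h) * exp (-(s * h)) = 1 := by rw [← exp_add, add_neg_cancel, exp_zero]
  simp only [Pi.neg_apply, cosh_eq]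
  linear_combination (-g₁ * s / sinh (s * h)) * hexp

lemma abs_deriv_harmonicMode_self_sub_le {s h : ℝ} (hs : 0 < s) (hh : 0 < h) (g₁ g₂ : ℝ) :
    |deriv (harmonicMode s h g₁ g₂) h - (g₂ - g₁) / h|
      ≤ (|g₁| + |g₂|) * s ^ 2 * cosh (s * h) * h := by
  rw [(hasDerivAt_harmonicMode_self s h g₁ g₂).deriv]
  set t := s * h with ht
  have htpos : 0 < t := mul_pos hs hh
  have hsinh : t ≤ sinh t := self_le_sinh_iff.2 htpos.le
  have hsplit : s * (g₂ * cosh t - g₁) / sinh t - (g₂ - g₁) / h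
      = (g₂ * (t * cosh t - sinh t) + g₁ * (sinh t - t)) / (h * sinh t) := by
    have : sinh t ≠ 0 := (htpos.trans_le hsinh).ne'
    field_simp
    ring
  have hnum : |g₂ * (t * cosh t - sinh t) + g₁ * (sinh t - t)|
      ≤ (|g₁| + |g₂|) * (t ^ 3 * cosh t) :=
    calc _ ≤ |g₂ * (t * cosh t - sinh t)| + |g₁ * (sinh t - t)| := abs_add_le _ _
      _ = |g₂| * |t * cosh t - sinh t| + |g₁| * |sinh t - t| := by rw [abs_mul, abs_mul]
      _ ≤ |g₂| * (t ^ 3 * cosh t) + |g₁| * (t ^ 3 * cosh t) := by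
          gcongr
          exacts [abs_mul_cosh_sub_sinh_le htpos.le, abs_sinh_sub_self_le htpos.le]
      _ = _ := by ring
  rw [hsplit, abs_div, abs_of_pos (mul_pos hh (htpos.trans_le hsinh))]
  calc _ ≤ (|g₁| + |g₂|) * (t ^ 3 * cosh t) / (h * t) := by gcongr
    _ = (|g₁| + |g₂|) * s ^ 2 * cosh t * h := by rw [ht]; field_simp

/-- mode-wise form of (3.9): Ψ_h'(h) ≈ (g₂ - g₁)/h up to O(h). -/
theorem stmt_6 (lam g1 g2 : ℝ) (hlam : 0 < lam)
    (Psi : ℝ → ℝ → ℝ)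
    (hPsi : ∀ h R : ℝ, Psi h R =
      (g2 - g1 * Real.exp (-(Real.sqrt lam * h))) / (2 * Real.sinh (Real.sqrt lam * h)) *
        Real.exp (Real.sqrt lam * R)
      + (-g2 + g1 * Real.exp (Real.sqrt lam * h)) / (2 * Real.sinh (Real.sqrt lam * h)) *
        Real.exp (-(Real.sqrt lam * R))) :
    ∃ C > 0, ∀ h : ℝ, 0 < h → h ≤ 1 →
      |deriv (Psi h) h - (g2 - g1) / h| ≤ C * h := by
  set s := √lam
  have hs : 0 < s := sqrt_pos.2 hlam
  refine ⟨(|g1| + |g2|) * s ^ 2 * cosh s + 1, by positivity, fun h hh hh1 => ?_⟩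
  have hPsi_h : Psi h = harmonicMode s h g1 g2 := funext (hPsi h)
  have hcosh : cosh (s * h) ≤ cosh s :=
    cosh_le_cosh_of_le (mul_pos hs hh).le (mul_le_of_le_one_right hs.le hh1)
  rw [hPsi_h]
  calc _ ≤ (|g1| + |g2|) * s ^ 2 * cosh (s * h) * h :=
        abs_deriv_harmonicMode_self_sub_le hs hh g1 g2
    _ ≤ (|g1| + |g2|) * s ^ 2 * cosh s * h := by gcongr
    _ ≤ ((|g1| + |g2|) * s ^ 2 * cosh s + 1) * h := by gcongr; linarith
end
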